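/- Convolution theorem for P̄: for f, g ∈ S(ℝ²ⁿ) and α ∈ (ℝ \ {0})ⁿ, P̄_α(f * g) = (P̄_α f) * (P̄_α g), with convolution on ℝ²ⁿ on the left and on ℝⁿ on the right. -/

import Mathlib

open MeasureTheory SchwartzMap FourierTransform Real

noncomputable section

abbrev En (n : ℕ) := EuclideanSpace ℝ (Fin n)
abbrev E2n (n : ℕ) := WithLp 2 (En n × En n)

instance (n : ℕ) : MeasureSpace (E2n n) where
  toMeasurableSpace := WithLp.measurableSpace 2 (En n × En n)
  volume := (volume : Measure (En n × En n)).map (WithLp.toLp 2)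
instance (n : ℕ) : BorelSpace (E2n n) := inferInstanceAs (BorelSpace (WithLp 2 (En n × En n)))

/-- The uncoupled photography transform `P̄`, with one parameter `αᵢ` per pair `(xᵢ, uᵢ)`. -/
def photoBar (n : ℕ) (f : E2n n → ℂ) (α : Fin n → ℝ) (xbar : En n) : ℂ :=
  (∏ i, |α i|)⁻¹ •
    ∫ u : En n, f (WithLp.toLp 2 ((WithLp.toLp 2 (fun i => (α i)⁻¹ * xbar i + (1 - (α i)⁻¹) * u i) : En n), u))

/-!
In the coordinates `(a, u) ↦ (α⁻¹ a + (1 - α⁻¹) u, u)` of `ℝ²ⁿ`, a linear change of variables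
with Jacobian `∏ αᵢ⁻¹`, `P̄_α f (a)` is `∏ |αᵢ|⁻¹` times the integral of `f` over the fibre
`{a} × ℝⁿ`. Being linear, the chart turns the convolution on `ℝ²ⁿ` into one on `ℝⁿ × ℝⁿ` (at the
cost of one Jacobian factor), and integrating a convolution on a product over the second factor
gives the convolution of the fibre integrals: by Fubini and translation invariance in `u`. Schwartz
decay, uniform in the first variable, bounds the fibre integrals and so justifies Fubini.
-/

section LinearChangeOfVariables

variable {E G : Type*} [NormedAddCommGroup E] [NormedSpace ℝ E] [MeasurableSpace E] [BorelSpace E]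
  [FiniteDimensional ℝ E] (μ : Measure E) [μ.IsAddHaarMeasure]
  [NormedAddCommGroup G] [NormedSpace ℝ G]

theorem integral_eq_abs_det_smul_integral_comp_linearEquiv (L : E ≃ₗ[ℝ] E) (h : E → G) :
    ∫ x, h x ∂μ = |LinearMap.det (L : E →ₗ[ℝ] E)| • ∫ x, h (L x) ∂μ := by
  have hdet : LinearMap.det (L : E →ₗ[ℝ] E) ≠ 0 := (LinearEquiv.isUnit_det' L).ne_zero
  have hcomp : ∫ x, h (L x) ∂μ = |LinearMap.det (L : E →ₗ[ℝ] E)|⁻¹ • ∫ x, h x ∂μ := by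
    let e : E ≃ᵐ E := L.toContinuousLinearEquiv.toHomeomorph.toMeasurableEquiv
    change ∫ x, h (e x) ∂μ = _
    rw [← integral_map_equiv e h]
    change ∫ x, h x ∂(μ.map (L : E →ₗ[ℝ] E)) = _
    rw [Measure.map_linearMap_addHaar_eq_smul_addHaar μ hdet, integral_smul_measure,
      ENNReal.toReal_ofReal (abs_nonneg _), abs_inv]
  rw [hcomp, smul_smul, mul_inv_cancel₀ (abs_ne_zero.2 hdet), one_smul]

end LinearChangeOfVariables

namespace SchwartzMap

variable {D E F V : Type*} [NormedAddCommGroup D] [NormedSpace ℝ D]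
  [NormedAddCommGroup V] [NormedSpace ℝ V]

theorem exists_norm_le_mul_one_add_norm_rpow_neg (φ : 𝓢(D, V)) (k : ℕ) :
    ∃ C, ∀ x, ‖φ x‖ ≤ C * (1 + ‖x‖) ^ (-(k : ℝ)) := by
  refine ⟨2 ^ k * (Finset.Iic (k, 0)).sup (fun m => SchwartzMap.seminorm ℝ m.1 m.2) φ,
    fun x => ?_⟩
  rw [rpow_neg (by positivity), ← div_eq_mul_inv, le_div_iff₀ (by positivity), rpow_natCast,
    mul_comm]
  simpa using one_add_le_sup_seminorm_apply (𝕜 := ℝ) (m := (k, 0)) le_rfl le_rfl φ x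

variable [NormedAddCommGroup E] [NormedSpace ℝ E] [NormedAddCommGroup F] [NormedSpace ℝ F]
  [MeasurableSpace F]

theorem exists_integrable_bound_apply_prodMk (φ : 𝓢(E × F, V)) (ν : Measure F)
    [ν.HasTemperateGrowth] : ∃ b : F → ℝ, Integrable b ν ∧ ∀ a u, ‖φ (a, u)‖ ≤ b u := by
  obtain ⟨C, hC⟩ := φ.exists_norm_le_mul_one_add_norm_rpow_neg ν.integrablePower
  have hC0 : 0 ≤ C := by simpa using (norm_nonneg _).trans (hC 0)
  refine ⟨fun u => C * (1 + ‖u‖) ^ (-(ν.integrablePower : ℝ)),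
    (Measure.integrable_pow_neg_integrablePower ν).const_mul C, fun a u => (hC _).trans ?_⟩
  refine mul_le_mul_of_nonneg_left (rpow_le_rpow_of_nonpos (by positivity) ?_ (by simp)) hC0
  grw [norm_snd_le (a, u)]

variable {𝕜 : Type*} [RCLike 𝕜] [FiniteDimensional ℝ E] [MeasurableSpace E] [BorelSpace E]
  {μ : Measure E} [μ.IsAddHaarMeasure] [FiniteDimensional ℝ F] [BorelSpace F] {ν : Measure F}
  [ν.IsAddHaarMeasure]

theorem integral_fiber_convolution (φ ψ : 𝓢(E × F, 𝕜)) (x : E) :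
    ∫ u, ∫ p, φ ((x, u) - p) * ψ p ∂(μ.prod ν) ∂ν =
      ∫ y, (∫ u, φ (x - y, u) ∂ν) * ∫ v, ψ (y, v) ∂ν ∂μ := by
  obtain ⟨b, hb, hφb⟩ := φ.exists_integrable_bound_apply_prodMk ν
  have hfiber : ∀ a, Integrable (fun u => φ (a, u)) ν := fun a =>
    hb.mono' (by fun_prop) (ae_of_all _ (hφb a))
  have hfiber_le : ∀ a, ∫ u, ‖φ (a, u)‖ ∂ν ≤ ∫ u, b u ∂ν := fun a =>
    integral_mono (hfiber a).norm hb (hφb a)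
  have hmeas : AEStronglyMeasurable (Function.uncurry fun u (p : E × F) => φ ((x, u) - p) * ψ p)
      (ν.prod (μ.prod ν)) := by
    apply Continuous.aestronglyMeasurable
    fun_prop
  have hint : Integrable (Function.uncurry fun u (p : E × F) => φ ((x, u) - p) * ψ p)
      (ν.prod (μ.prod ν)) := by
    refine (integrable_prod_iff' hmeas).2 ⟨ae_of_all _ fun p =>
      ((hfiber (x - p.1)).comp_sub_right p.2).mul_const (ψ p), ?_⟩
    refine (ψ.integrable.norm.const_mul (∫ u, b u ∂ν)).mono'
      hmeas.norm.prod_swap.integral_prod_right' (ae_of_all _ fun ⟨y, v⟩ => ?_)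
    simp only [Function.uncurry_apply_pair, norm_mul, norm_norm, Prod.mk_sub_mk,
      integral_mul_const]
    rw [norm_of_nonneg (by positivity), integral_sub_right_eq_self (fun u => ‖φ (x - y, u)‖) v]
    exact mul_le_mul_of_nonneg_right (hfiber_le _) (norm_nonneg _)
  have hmarg : Integrable (fun p : E × F => (∫ u, φ (x - p.1, u) ∂ν) * ψ p) (μ.prod ν) := by
    refine ψ.integrable.bdd_mul (c := ∫ u, b u ∂ν) ?_ (ae_of_all _ fun p =>
      (norm_integral_le_integral_norm _).trans (hfiber_le _))
    exact ((φ.continuous.stronglyMeasurable.integral_prod_right' (ν := ν)).comp_measurable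
      (measurable_const.sub measurable_fst)).aestronglyMeasurable
  calc ∫ u, ∫ p, φ ((x, u) - p) * ψ p ∂(μ.prod ν) ∂ν
      = ∫ p, ∫ u, φ ((x, u) - p) * ψ p ∂ν ∂(μ.prod ν) := integral_integral_swap hint
    _ = ∫ p, (∫ u, φ (x - p.1, u) ∂ν) * ψ p ∂(μ.prod ν) := by
        congr 1 with ⟨y, v⟩
        rw [integral_mul_const]
        exact congrArg (· * ψ (y, v)) (integral_sub_right_eq_self (fun u => φ (x - y, u)) v)
    _ = ∫ y, ∫ v, (∫ u, φ (x - y, u) ∂ν) * ψ (y, v) ∂ν ∂μ := integral_prod _ hmarg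
    _ = ∫ y, (∫ u, φ (x - y, u) ∂ν) * ∫ v, ψ (y, v) ∂ν ∂μ := by
        simp only [integral_const_mul]

end SchwartzMap

section Photography

variable {n : ℕ} (α : Fin n → ℝ)

def photoShear : (En n × En n) →ₗ[ℝ] (En n × En n) where
  toFun p := (WithLp.toLp 2 fun i => (α i)⁻¹ * p.1 i + (1 - (α i)⁻¹) * p.2 i, p.2)
  map_add' p q := by
    ext i
    · simp only [Prod.fst_add, Prod.snd_add, PiLp.add_apply]
      ring
    · rfl
  map_smul' r p := by
    ext i
    · simp only [Prod.smul_fst, Prod.smul_snd, PiLp.smul_apply, smul_eq_mul, RingHom.id_apply]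
      ring
    · rfl

theorem det_photoShear : LinearMap.det (photoShear α) = ∏ i, (α i)⁻¹ := by
  let B := (PiLp.basisFun 2 ℝ (Fin n)).prod (PiLp.basisFun 2 ℝ (Fin n))
  have hmat : LinearMap.toMatrix B B (photoShear α) =
      Matrix.fromBlocks (Matrix.diagonal fun i => (α i)⁻¹)
        (Matrix.diagonal fun i => 1 - (α i)⁻¹) 0 1 := by
    ext (i | i) (j | j) <;>
      simp [B, LinearMap.toMatrix_apply, photoShear, Matrix.diagonal_apply, Matrix.one_apply,
        PiLp.single_apply, eq_comm]
  rw [← LinearMap.det_toMatrix B, hmat, Matrix.det_fromBlocks_zero₂₁, Matrix.det_diagonal,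
    Matrix.det_one, mul_one]

variable {α}

theorem det_photoShear_ne_zero (hα : ∀ i, α i ≠ 0) : LinearMap.det (photoShear α) ≠ 0 := by
  rw [det_photoShear]
  exact Finset.prod_ne_zero_iff.2 fun i _ => inv_ne_zero (hα i)

def photoChart (hα : ∀ i, α i ≠ 0) : (En n × En n) ≃L[ℝ] E2n n :=
  ((photoShear α).equivOfDetNeZero (det_photoShear_ne_zero hα)).toContinuousLinearEquiv.trans
    (WithLp.prodContinuousLinearEquiv 2 ℝ (En n) (En n)).symm

variable (hα : ∀ i, α i ≠ 0)

theorem photoBar_eq_smul_integral_photoChart (h : E2n n → ℂ) (a : En n) :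
    photoBar n h α a = (∏ i, |α i|)⁻¹ • ∫ u, h (photoChart hα (a, u)) := rfl

theorem integral_eq_smul_integral_photoChart {G : Type*} [NormedAddCommGroup G] [NormedSpace ℝ G]
    (h : E2n n → G) : ∫ w, h w = (∏ i, |α i|)⁻¹ • ∫ p, h (photoChart hα p) := by
  have hdet : |LinearMap.det (photoShear α)| = (∏ i, |α i|)⁻¹ := by
    rw [det_photoShear, Finset.abs_prod, ← Finset.prod_inv_distrib]
    simp only [abs_inv]
  calc ∫ w, h w = ∫ q : En n × En n, h (WithLp.toLp 2 q) :=
        integral_map_equiv (MeasurableEquiv.toLp 2 (En n × En n)) h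
    _ = |LinearMap.det (photoShear α)| • ∫ p, h (photoChart hα p) :=
        integral_eq_abs_det_smul_integral_comp_linearEquiv (volume.prod volume)
          ((photoShear α).equivOfDetNeZero (det_photoShear_ne_zero hα)) _
    _ = (∏ i, |α i|)⁻¹ • ∫ p, h (photoChart hα p) := by rw [hdet]

end Photography

/-- convolution theorem for the uncoupled photography transform `P̄`. -/
theorem photoBar_convolution (n : ℕ) (f g : 𝓢(E2n n, ℂ)) (α : Fin n → ℝ)
    (hα : ∀ i, α i ≠ 0) (xbar : En n) :
    photoBar n (fun z => ∫ w : E2n n, f (z - w) * g w) α xbar =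
      ∫ y : En n, photoBar n (⇑f) α (xbar - y) * photoBar n (⇑g) α y := by
  set c := (∏ i, |α i|)⁻¹
  let φ := compCLMOfContinuousLinearEquiv ℂ (photoChart hα) f
  let ψ := compCLMOfContinuousLinearEquiv ℂ (photoChart hα) g
  calc photoBar n (fun z => ∫ w : E2n n, f (z - w) * g w) α xbar
      = c • ∫ u, c • ∫ p, φ ((xbar, u) - p) * ψ p := by
        simp only [photoBar_eq_smul_integral_photoChart hα,
          integral_eq_smul_integral_photoChart hα, ← map_sub]
        rfl
    _ = (c * c) • ∫ y, (∫ u, φ (xbar - y, u)) * ∫ v, ψ (y, v) := by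
        rw [integral_smul, smul_smul, ← φ.integral_fiber_convolution ψ xbar]
        rfl
    _ = ∫ y, photoBar n f α (xbar - y) * photoBar n g α y := by
        simp only [photoBar_eq_smul_integral_photoChart hα, smul_mul_smul_comm, integral_smul]
        rfl
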